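/- arXiv:2502.02014 — 5 statements merged into one kernel-verified Lean document; each statement's English description precedes it below -/
import Mathlib

section
/- Let D ⊆ ℝⁿ be an open set containing the origin, let f : ℝⁿ → ℝⁿ be locally Lipschitz with f(0) = 0, and let V : ℝⁿ → ℝ be continuously differentiable on D with V(0) = 0, V(x) > 0 for all x ∈ D \ {0}, and Lie derivative L_f V(x) = ∑ᵢ (∂V/∂xᵢ)(x) · fᵢ(x) < 0 for all x ∈ D \ {0}. Then the origin is an asymptotically stable equilibrium of the system ẋ = f(x): for every ε > 0 there exists δ > 0 such that every solution x(·) of ẋ = f(x) with ‖x(0)‖ < δ satisfies ‖x(t)‖ < ε for all t ≥ 0, and moreover δ can be chosen so that ‖x(0)‖ < δ implies x(t) → 0 as t → ∞. -/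
/-!
Along a solution that stays in `D`, `t ↦ V (x t)` has derivative `DV (x t) (f (x t)) ≤ 0`, so it is
nonincreasing. If `c > 0` bounds `V` from below on a sphere of radius `ρ` inside `D`, a solution
starting inside the ball with `V < c` can therefore never reach that sphere: this is stability.
If `V (x t)` stayed above some `ε > 0`, the solution would remain in the compact set
`{‖y‖ ≤ ρ, V y ≥ ε}`, which avoids `0`, so `DV y (f y) ≤ -k < 0` there and `V (x t) ≤ V (x 0) - k t`
would eventually be negative. Hence `V (x t) → 0`, and `x t → 0` because `V` is bounded below by a
positive constant on every compact set away from `0`.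
-/

open Set Filter Topology Metric

theorem EuclideanSpace.sum_map_single_mul {ι : Type*} [Fintype ι] [DecidableEq ι]
    (L : EuclideanSpace ℝ ι →L[ℝ] ℝ) (v : EuclideanSpace ℝ ι) :
    ∑ i, L (EuclideanSpace.single i 1) * v i = L v := by
  conv_rhs => rw [← (EuclideanSpace.basisFun ι ℝ).sum_repr v]
  simp [mul_comm]

theorem exists_eq_forall_le_of_continuousOn_Icc {g : ℝ → ℝ} {a b r : ℝ} (hab : a ≤ b)
    (hg : ContinuousOn g (Icc a b)) (ha : g a ≤ r) (hb : r ≤ g b) :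
    ∃ t ∈ Icc a b, g t = r ∧ ∀ s ∈ Icc a t, g s ≤ r := by
  have hcross : ∀ s ∈ Icc a b, r ≤ g s → ∃ u ∈ Icc a s, g u = r := fun s hs hrs =>
    intermediate_value_Icc hs.1 (hg.mono (Icc_subset_Icc_right hs.2)) ⟨ha, hrs⟩
  set S := Icc a b ∩ g ⁻¹' {r}
  have hS : IsCompact S := isCompact_Icc.of_isClosed_subset
    (hg.preimage_isClosed_of_isClosed isClosed_Icc isClosed_singleton) inter_subset_left
  obtain ⟨u, hu, hgu⟩ := hcross b (right_mem_Icc.2 hab) hb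
  obtain ⟨t, ⟨htab, hgt⟩, hleast⟩ := hS.exists_isLeast ⟨u, hu, hgu⟩
  refine ⟨t, htab, hgt, fun s hs => le_of_not_gt fun hrs => ?_⟩
  obtain ⟨u, hu, hgu⟩ := hcross s ⟨hs.1, hs.2.trans htab.2⟩ hrs.le
  have hts : t ≤ u := hleast ⟨⟨hu.1, hu.2.trans (hs.2.trans htab.2)⟩, hgu⟩
  rw [le_antisymm hs.2 (hts.trans hu.2), hgt] at hrs
  exact lt_irrefl r hrs

theorem tendsto_of_tendsto_comp_of_pos {α X : Type*} [MetricSpace X] {l : Filter α} {x : α → X}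
    {V : X → ℝ} {K : Set X} {p : X} (hK : IsCompact K) (hV : ContinuousOn V K)
    (hpos : ∀ y ∈ K, y ≠ p → 0 < V y) (hxK : ∀ᶠ t in l, x t ∈ K)
    (hVx : Tendsto (fun t => V (x t)) l (𝓝 0)) : Tendsto x l (𝓝 p) := by
  refine Metric.tendsto_nhds.2 fun ρ hρ => ?_
  obtain ⟨c, hc, hcV⟩ := (hK.diff isOpen_ball).exists_forall_le' (hV.mono sdiff_subset)
    fun y hy => hpos y hy.1 fun h => hy.2 (by rw [h]; exact mem_ball_self hρ)
  filter_upwards [hxK, hVx.eventually_lt_const hc] with t htK htV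
  by_contra h
  exact (hcV (x t) ⟨htK, h⟩).not_gt htV

section Lyapunov

variable {E : Type*} [NormedAddCommGroup E] [NormedSpace ℝ E] {f : E → E} {V : E → ℝ}
  {x : ℝ → E}

theorem antitoneOn_add_mul_of_fderiv_apply_le {s : Set ℝ} {k : ℝ} (hs : Convex ℝ s)
    (hx : ∀ t ∈ s, HasDerivAt x (f (x t)) t) (hV : ∀ t ∈ s, DifferentiableAt ℝ V (x t))
    (hle : ∀ t ∈ s, fderiv ℝ V (x t) (f (x t)) ≤ -k) :
    AntitoneOn (fun t => V (x t) + k * t) s := by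
  have hderiv : ∀ t ∈ s,
      HasDerivAt (fun t => V (x t) + k * t) (fderiv ℝ V (x t) (f (x t)) + k) t := fun t ht =>
    ((hV t ht).hasFDerivAt.comp_hasDerivAt t (hx t ht)).add
      (by simpa using (hasDerivAt_id t).const_mul k)
  refine antitoneOn_of_hasDerivWithinAt_nonpos hs
    (fun t ht => (hderiv t ht).continuousAt.continuousWithinAt)
    (fun t ht => (hderiv t (interior_subset ht)).hasDerivWithinAt) fun t ht => ?_
  linarith [hle t (interior_subset ht)]

theorem antitoneOn_of_fderiv_apply_nonpos {s : Set ℝ} (hs : Convex ℝ s)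
    (hx : ∀ t ∈ s, HasDerivAt x (f (x t)) t) (hV : ∀ t ∈ s, DifferentiableAt ℝ V (x t))
    (hle : ∀ t ∈ s, fderiv ℝ V (x t) (f (x t)) ≤ 0) :
    AntitoneOn (fun t => V (x t)) s := by
  simpa using antitoneOn_add_mul_of_fderiv_apply_le (k := 0) hs hx hV (by simpa using hle)

theorem norm_lt_of_lt_of_forall_sphere_le {D : Set E} {r c : ℝ}
    (hx : ∀ t ≥ 0, HasDerivAt x (f (x t)) t) (hrD : closedBall 0 r ⊆ D)
    (hV : ∀ y ∈ D, DifferentiableAt ℝ V y) (hle : ∀ y ∈ D, fderiv ℝ V y (f y) ≤ 0)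
    (hc : ∀ y ∈ sphere 0 r, c ≤ V y) (hx0 : ‖x 0‖ < r) (hVx0 : V (x 0) < c) :
    ∀ t ≥ 0, ‖x t‖ < r := by
  intro T hT
  by_contra! hrT
  obtain ⟨t, ht, hxt, hbefore⟩ := exists_eq_forall_le_of_continuousOn_Icc hT
    (fun s hs => (hx s hs.1).continuousAt.norm.continuousWithinAt) hx0.le hrT
  have hD : ∀ s ∈ Icc 0 t, x s ∈ D := fun s hs => hrD (mem_closedBall_zero_iff.2 (hbefore s hs))
  have hanti := antitoneOn_of_fderiv_apply_nonpos (convex_Icc 0 t)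
    (fun s hs => hx s hs.1) (fun s hs => hV _ (hD s hs)) fun s hs => hle _ (hD s hs)
  have := hanti (left_mem_Icc.2 ht.1) (right_mem_Icc.2 ht.1) ht.1
  linarith [hc (x t) (mem_sphere_zero_iff_norm.2 hxt)]

theorem tendsto_comp_zero_of_fderiv_apply_neg {K : Set E} (hK : IsCompact K)
    (hx : ∀ t ≥ 0, HasDerivAt x (f (x t)) t) (hxK : ∀ t ≥ 0, x t ∈ K)
    (hVc : ContinuousOn V K) (hV : ∀ y ∈ K, DifferentiableAt ℝ V y) (hV0 : ∀ y ∈ K, 0 ≤ V y)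
    (hLc : ContinuousOn (fun y => fderiv ℝ V y (f y)) K)
    (hle : ∀ y ∈ K, fderiv ℝ V y (f y) ≤ 0) (hlt : ∀ y ∈ K, 0 < V y → fderiv ℝ V y (f y) < 0) :
    Tendsto (fun t => V (x t)) atTop (𝓝 0) := by
  have hanti : AntitoneOn (fun t => V (x t)) (Ici 0) := antitoneOn_of_fderiv_apply_nonpos
    (convex_Ici 0) hx (fun t ht => hV _ (hxK t ht)) fun t ht => hle _ (hxK t ht)
  refine tendsto_order.2 ⟨fun a ha => ?_, fun ε hε => ?_⟩
  · filter_upwards [eventually_ge_atTop 0] with t ht using ha.trans_le (hV0 _ (hxK t ht))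
  by_cases h : ∃ t₀ ≥ 0, V (x t₀) < ε
  · obtain ⟨t₀, ht₀, hVt₀⟩ := h
    filter_upwards [eventually_ge_atTop t₀] with t ht
    exact (hanti ht₀ (ht₀.trans ht) ht).trans_lt hVt₀
  push Not at h
  have hKε : IsCompact (K ∩ V ⁻¹' Ici ε) := hK.of_isClosed_subset
    (hVc.preimage_isClosed_of_isClosed hK.isClosed isClosed_Ici) inter_subset_left
  obtain ⟨k, hk, hkL⟩ := hKε.exists_forall_le' (hLc.neg.mono inter_subset_left)
    fun y hy => neg_pos.2 (hlt y hy.1 (hε.trans_le hy.2))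
  have hanti' := antitoneOn_add_mul_of_fderiv_apply_le (convex_Ici 0) hx
    (fun t ht => hV _ (hxK t ht)) fun t ht => le_neg.2 (hkL _ ⟨hxK t ht, h t ht⟩)
  set T := V (x 0) / k + 1
  have hT : 0 ≤ T := by have := hV0 _ (hxK 0 le_rfl); positivity
  have hdec := hanti' (mem_Ici.2 le_rfl) hT hT
  have hkT : k * T = V (x 0) + k := by rw [mul_add, mul_div_cancel₀ _ hk.ne', mul_one]
  simp only [mul_zero, add_zero, hkT] at hdec
  linarith [hV0 _ (hxK T hT)]

theorem fderiv_apply_nonpos_of_isLocalMin {D : Set E} (hmin : IsLocalMin V 0)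
    (hlt : ∀ y ∈ D, y ≠ 0 → fderiv ℝ V y (f y) < 0) (y : E) (hy : y ∈ D) :
    fderiv ℝ V y (f y) ≤ 0 := by
  obtain rfl | hy0 := eq_or_ne y 0
  · simp [hmin.fderiv_eq_zero]
  · exact (hlt y hy hy0).le

theorem exists_pos_forall_norm_lt_of_fderiv_apply_nonpos [ProperSpace E] {D : Set E} {ρ : ℝ}
    (hρ : 0 < ρ) (hρD : closedBall 0 ρ ⊆ D) (hV : ∀ y ∈ D, DifferentiableAt ℝ V y)
    (hV0 : V 0 = 0) (hpos : ∀ y ∈ D, y ≠ 0 → 0 < V y)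
    (hle : ∀ y ∈ D, fderiv ℝ V y (f y) ≤ 0) :
    ∃ δ > 0, ∀ x : ℝ → E, (∀ t ≥ 0, HasDerivAt x (f (x t)) t) → ‖x 0‖ < δ →
      ∀ t ≥ 0, ‖x t‖ < ρ := by
  have hVc : ContinuousOn V (sphere 0 ρ) := fun y hy =>
    (hV y (hρD (sphere_subset_closedBall hy))).continuousAt.continuousWithinAt
  obtain ⟨c, hc, hcV⟩ := (isCompact_sphere 0 ρ).exists_forall_le' hVc fun y hy =>
    hpos y (hρD (sphere_subset_closedBall hy)) (ne_zero_of_mem_sphere hρ.ne' ⟨y, hy⟩)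
  have hnear : ∀ᶠ y in 𝓝 0, V y < c ∧ y ∈ ball 0 ρ :=
    ((hV 0 (hρD (mem_closedBall_self hρ.le))).continuousAt.eventually_lt continuousAt_const
      (by rwa [hV0])).and (ball_mem_nhds 0 hρ)
  obtain ⟨δ, hδ, hδnear⟩ := Metric.eventually_nhds_iff_ball.1 hnear
  refine ⟨δ, hδ, fun x hx hx0 => ?_⟩
  obtain ⟨hVx0, hx0ρ⟩ := hδnear (x 0) (mem_ball_zero_iff.2 hx0)
  exact norm_lt_of_lt_of_forall_sphere_le hx hρD hV hle hcV (mem_ball_zero_iff.1 hx0ρ) hVx0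

theorem tendsto_zero_of_fderiv_apply_neg {D K : Set E} (hK : IsCompact K) (hKD : K ⊆ D)
    (hx : ∀ t ≥ 0, HasDerivAt x (f (x t)) t) (hxK : ∀ t ≥ 0, x t ∈ K)
    (hV : ∀ y ∈ D, DifferentiableAt ℝ V y) (hV0 : V 0 = 0) (hpos : ∀ y ∈ D, y ≠ 0 → 0 < V y)
    (hLc : ContinuousOn (fun y => fderiv ℝ V y (f y)) D)
    (hle : ∀ y ∈ D, fderiv ℝ V y (f y) ≤ 0) (hlt : ∀ y ∈ D, y ≠ 0 → fderiv ℝ V y (f y) < 0) :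
    Tendsto x atTop (𝓝 0) := by
  have hVc : ContinuousOn V K := fun y hy => (hV y (hKD hy)).continuousAt.continuousWithinAt
  have hnonneg : ∀ y ∈ K, 0 ≤ V y := fun y hy =>
    (eq_or_ne y 0).elim (fun h => (h ▸ hV0).ge) fun h => (hpos y (hKD hy) h).le
  have hne : ∀ y, 0 < V y → y ≠ 0 := by
    rintro y hVy rfl
    exact hVy.ne' hV0
  refine tendsto_of_tendsto_comp_of_pos hK hVc (fun y hy => hpos y (hKD hy))
    ((eventually_ge_atTop 0).mono hxK) ?_
  exact tendsto_comp_zero_of_fderiv_apply_neg hK hx hxK hVc (fun y hy => hV y (hKD hy)) hnonneg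
    (hLc.mono hKD) (fun y hy => hle y (hKD hy)) fun y hy hVy => hlt y (hKD hy) (hne y hVy)

end Lyapunov

theorem lyapunov_asymptotic_stability_general
    (n : ℕ) (D : Set (EuclideanSpace ℝ (Fin n)))
    (hD : IsOpen D) (h0D : (0 : EuclideanSpace ℝ (Fin n)) ∈ D)
    (f : EuclideanSpace ℝ (Fin n) → EuclideanSpace ℝ (Fin n))
    (hf : LocallyLipschitz f)
    (V : EuclideanSpace ℝ (Fin n) → ℝ)
    (hV : ContDiffOn ℝ 1 V D) (hV0 : V 0 = 0)
    (hVpos : ∀ x ∈ D, x ≠ 0 → 0 < V x)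
    (hVdec : ∀ x ∈ D, x ≠ 0 →
      (∑ i, fderiv ℝ V x (EuclideanSpace.single i 1) * f x i) < 0) :
    ∀ ε > 0, ∃ δ > 0, ∀ x : ℝ → EuclideanSpace ℝ (Fin n),
      (∀ t ≥ (0:ℝ), HasDerivAt x (f (x t)) t) → ‖x 0‖ < δ →
        (∀ t ≥ (0:ℝ), ‖x t‖ < ε) ∧ Filter.Tendsto x Filter.atTop (nhds 0) := by
  simp only [EuclideanSpace.sum_map_single_mul] at hVdec
  have hVdiff : ∀ y ∈ D, DifferentiableAt ℝ V y := fun y hy =>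
    (hV.contDiffAt (hD.mem_nhds hy)).differentiableAt one_ne_zero
  have hmin : IsLocalMin V 0 := mem_of_superset (hD.mem_nhds h0D) fun y hy => show V 0 ≤ V y from
    (eq_or_ne y 0).elim (fun h => h ▸ le_rfl) fun h => hV0 ▸ (hVpos y hy h).le
  have hle := fderiv_apply_nonpos_of_isLocalMin hmin hVdec
  have hLc : ContinuousOn (fun y => fderiv ℝ V y (f y)) D :=
    (hV.continuousOn_fderiv_of_isOpen hD le_rfl).clm_apply hf.continuous.continuousOn
  intro ε hε
  obtain ⟨r, hr, hrD⟩ := Metric.nhds_basis_closedBall.mem_iff.1 (hD.mem_nhds h0D)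
  obtain ⟨ρ, hρ, hρε, hρD⟩ : ∃ ρ > 0, ρ ≤ ε ∧ closedBall 0 ρ ⊆ D :=
    ⟨min r ε, lt_min hr hε, min_le_right _ _,
      (closedBall_subset_closedBall (min_le_left _ _)).trans hrD⟩
  obtain ⟨δ, hδ, hstable⟩ :=
    exists_pos_forall_norm_lt_of_fderiv_apply_nonpos hρ hρD hVdiff hV0 hVpos hle
  refine ⟨δ, hδ, fun x hx hx0 => ⟨fun t ht => (hstable x hx hx0 t ht).trans_le hρε, ?_⟩⟩
  exact tendsto_zero_of_fderiv_apply_neg (isCompact_closedBall 0 ρ) hρD hx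
    (fun t ht => mem_closedBall_zero_iff.2 (hstable x hx hx0 t ht).le) hVdiff hV0 hVpos hLc hle
    hVdec

/-- **Lyapunov's theorem on asymptotic stability.**
If `D ⊆ ℝⁿ` is open with `0 ∈ D`, `f` is locally Lipschitz with `f 0 = 0`,
and `V` is continuously differentiable on `D` with `V 0 = 0`, `V > 0` on `D \ {0}`,
and Lie derivative `L_f V = ∑ i, ∂V/∂xᵢ · fᵢ < 0` on `D \ {0}`, then the origin is
an asymptotically stable equilibrium of `ẋ = f x`. -/
theorem lyapunov_asymptotic_stability
    (n : ℕ) (D : Set (EuclideanSpace ℝ (Fin n)))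
    (hD : IsOpen D) (h0D : (0 : EuclideanSpace ℝ (Fin n)) ∈ D)
    (f : EuclideanSpace ℝ (Fin n) → EuclideanSpace ℝ (Fin n))
    (hf : LocallyLipschitz f) (hf0 : f 0 = 0)
    (V : EuclideanSpace ℝ (Fin n) → ℝ)
    (hV : ContDiffOn ℝ 1 V D) (hV0 : V 0 = 0)
    (hVpos : ∀ x ∈ D, x ≠ 0 → 0 < V x)
    (hVdec : ∀ x ∈ D, x ≠ 0 →
      (∑ i, fderiv ℝ V x (EuclideanSpace.single i 1) * f x i) < 0) :
    ∀ ε > 0, ∃ δ > 0, ∀ x : ℝ → EuclideanSpace ℝ (Fin n),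
      (∀ t ≥ (0:ℝ), HasDerivAt x (f (x t)) t) → ‖x 0‖ < δ →
        (∀ t ≥ (0:ℝ), ‖x t‖ < ε) ∧ Filter.Tendsto x Filter.atTop (nhds 0) :=
  lyapunov_asymptotic_stability_general n D hD h0D f hf V hV hV0 hVpos hVdec
end

section
/- Let α ∈ (0,1) and let p : ℝ × ℝ → ℝ be such that for each parameter θ, r ↦ p(θ, r) is a continuous, strictly positive probability density on ℝ; assume p is continuously differentiable in θ, that for each θ the functions r ↦ (1+|r|)·p(θ,r) and r ↦ (1+|r|)·|∂p/∂θ(θ,r)| are integrable with, locally in θ, an integrable dominating function g(r) ≥ (1+|r|)·|∂p/∂θ(θ,r)|, and let q(θ) be the unique real number satisfying ∫_{q(θ)}^{∞} p(θ, r) dr = α, with θ ↦ q(θ) differentiable. Then the risk-seeking objective J(θ) = (1/α) ∫_{q(θ)}^{∞} r · p(θ, r) dr is differentiable and J'(θ) = (1/α) ∫_{q(θ)}^{∞} (r − q(θ)) · ∂p/∂θ(θ, r) dr. -/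
open MeasureTheory Set Metric Filter Topology

/-!
Fix `θ₀` and put `c = q θ₀`. Since `∫_{q θ}^∞ p θ = α` for every `θ`, the objective satisfies
`∫_{q θ}^∞ r p θ r dr = ∫_{q θ}^∞ (r - c) p θ r dr + c α`, so it suffices to differentiate the
integral with the baseline `c` subtracted. By the Leibniz rule for a moving lower limit its
derivative is `∫_c^∞ (r - c) ∂p/∂θ - q'(θ₀) · (c - c) p θ₀ c`, and the boundary term vanishes.
The Leibniz rule itself splits `∫_{q θ}^∞ f θ` into `∫_c^∞ f θ` (differentiated under the
integral sign by domination), `∫_c^{q θ} f θ₀` (fundamental theorem of calculus), and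
`∫_c^{q θ} (f θ - f θ₀)`, which is `o(θ - θ₀)` by the mean value theorem.
-/

theorem stronglyMeasurable_of_hasDerivAt_param {𝕜 α E : Type*} [NontriviallyNormedField 𝕜]
    [MeasurableSpace α] [NormedAddCommGroup E] [NormedSpace 𝕜 E] {f : 𝕜 → α → E} {f' : α → E}
    {θ : 𝕜} (hf : ∀ t, StronglyMeasurable (f t)) (hf' : ∀ r, HasDerivAt (f · r) (f' r) θ) :
    StronglyMeasurable f' := by
  refine stronglyMeasurable_of_tendsto (𝓝[≠] θ) (f := fun t r => slope (f · r) θ t)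
    (fun t => ?_) (tendsto_pi_nhds.2 fun r => (hf' r).tendsto_slope)
  simp only [slope_def_module]
  exact ((hf t).sub (hf θ)).const_smul _

theorem MeasureTheory.Integrable.mul_of_abs_le_mul_one_add_abs {μ : Measure ℝ} {f w : ℝ → ℝ}
    {C : ℝ} (hf : Integrable (fun r => (1 + |r|) * f r) μ) (hw : Measurable w)
    (hwC : ∀ r, |w r| ≤ C * (1 + |r|)) : Integrable (fun r => w r * f r) μ := by
  have hpos : ∀ r : ℝ, 0 < 1 + |r| := fun r => by positivity
  refine (hf.bdd_mul (c := C) (f := fun r => w r / (1 + |r|))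
    (hw.div (by fun_prop)).aestronglyMeasurable
    (ae_of_all _ fun r => ?_)).congr (ae_of_all _ fun r => ?_)
  · rw [Real.norm_eq_abs, abs_div, abs_of_pos (hpos r), div_le_iff₀ (hpos r)]
    exact hwC r
  · field_simp [(hpos r).ne']

theorem abs_sub_le_one_add_abs_mul_one_add_abs (r c : ℝ) : |r - c| ≤ (1 + |c|) * (1 + |r|) := by
  nlinarith [abs_sub r c, abs_nonneg r, abs_nonneg c]

theorem abs_sub_mul_le_of_one_add_abs_mul_le {r c x y : ℝ} (h : (1 + |r|) * |x| ≤ y) :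
    |(r - c) * x| ≤ (1 + |c|) * y :=
  calc |(r - c) * x| ≤ (1 + |c|) * ((1 + |r|) * |x|) := by
        rw [abs_mul, ← mul_assoc]
        exact mul_le_mul_of_nonneg_right (abs_sub_le_one_add_abs_mul_one_add_abs r c)
          (abs_nonneg _)
    _ ≤ (1 + |c|) * y := by gcongr

theorem hasDerivAt_intervalIntegral_zero_of_abs_le_mul {F : ℝ → ℝ → ℝ} {g q : ℝ → ℝ} {θ₀ : ℝ}
    (hg : Integrable g) (hq : ContinuousAt q θ₀)
    (hF : ∀ᶠ θ in 𝓝 θ₀, ∀ r, |F θ r| ≤ g r * |θ - θ₀|) :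
    HasDerivAt (fun θ => ∫ r in q θ₀..q θ, F θ r) 0 θ₀ := by
  have hG : Tendsto (fun θ => ∫ r in q θ₀..q θ, g r) (𝓝 θ₀) (𝓝 0) := by
    have h := ((intervalIntegral.continuous_primitive
      (fun _ _ => hg.intervalIntegrable) (q θ₀)).continuousAt.comp hq).tendsto
    simpa only [Function.comp_def, intervalIntegral.integral_same] using h
  rw [hasDerivAt_iff_isLittleO, Asymptotics.isLittleO_iff]
  intro c hc
  filter_upwards [hF, hG.norm.eventually (ge_mem_nhds (by simpa using hc))] with θ hFθ hGθ
  have hle := intervalIntegral.norm_integral_le_abs_of_norm_le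
    (ae_of_all _ fun r => (Real.norm_eq_abs _).trans_le (hFθ r))
    ((hg.intervalIntegrable (a := q θ₀) (b := q θ)).mul_const |θ - θ₀|)
  rw [intervalIntegral.integral_mul_const, abs_mul, abs_abs] at hle
  simp only [intervalIntegral.integral_same, sub_zero, smul_zero]
  rw [Real.norm_eq_abs (θ - θ₀)]
  exact hle.trans (mul_le_mul_of_nonneg_right hGθ (abs_nonneg _))

theorem hasDerivAt_setIntegral_Ioi_of_dominated {f df : ℝ → ℝ → ℝ} {g q : ℝ → ℝ} {θ₀ ε q' : ℝ}
    (hf_cont : ∀ θ, Continuous (f θ)) (hf_int : ∀ θ, Integrable (f θ))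
    (hdf : ∀ θ r, HasDerivAt (f · r) (df θ r) θ) (hε : 0 < ε) (hg : Integrable g)
    (hdf_le : ∀ θ ∈ ball θ₀ ε, ∀ r, |df θ r| ≤ g r) (hq : HasDerivAt q q' θ₀) :
    HasDerivAt (fun θ => ∫ r in Ioi (q θ), f θ r)
      ((∫ r in Ioi (q θ₀), df θ₀ r) - q' * f θ₀ (q θ₀)) θ₀ := by
  set c := q θ₀
  have hfixed : HasDerivAt (fun θ => ∫ r in Ioi c, f θ r) (∫ r in Ioi c, df θ₀ r) θ₀ :=
    (hasDerivAt_integral_of_dominated_loc_of_deriv_le (ball_mem_nhds θ₀ hε)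
      (Eventually.of_forall fun θ => (hf_cont θ).aestronglyMeasurable)
      (hf_int θ₀).integrableOn
      (stronglyMeasurable_of_hasDerivAt_param (fun θ => (hf_cont θ).stronglyMeasurable)
        (hdf θ₀)).aestronglyMeasurable
      (ae_of_all _ fun r θ hθ => (Real.norm_eq_abs _).trans_le (hdf_le θ hθ r))
      hg.integrableOn (ae_of_all _ fun r θ _ => hdf θ r)).2
  have hboundary : HasDerivAt (fun θ => ∫ r in c..q θ, f θ₀ r) (f θ₀ c * q') θ₀ :=
    (intervalIntegral.integral_hasDerivAt_right (hf_int θ₀).intervalIntegrable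
      (hf_cont θ₀).stronglyMeasurable.stronglyMeasurableAtFilter
      (hf_cont θ₀).continuousAt).comp θ₀ hq
  have hmvt : ∀ θ ∈ ball θ₀ ε, ∀ r, |f θ r - f θ₀ r| ≤ g r * |θ - θ₀| := fun θ hθ r => by
    simpa only [Real.norm_eq_abs, Real.dist_eq] using
      (convex_ball θ₀ ε).norm_image_sub_le_of_norm_hasDerivWithin_le
        (fun t _ => (hdf t r).hasDerivWithinAt)
        (fun t ht => (Real.norm_eq_abs _).trans_le (hdf_le t ht r)) (mem_ball_self hε) hθ
  have herror : HasDerivAt (fun θ => ∫ r in c..q θ, (f θ r - f θ₀ r)) 0 θ₀ :=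
    hasDerivAt_intervalIntegral_zero_of_abs_le_mul hg hq.continuousAt
      (eventually_of_mem (ball_mem_nhds θ₀ hε) hmvt)
  refine (hfixed.sub (hboundary.add herror)).congr_of_eventuallyEq
    (Eventually.of_forall fun θ => ?_) |>.congr_deriv (by ring)
  simp only [Pi.sub_apply, Pi.add_apply]
  rw [intervalIntegral.integral_sub (hf_int θ).intervalIntegrable (hf_int θ₀).intervalIntegrable,
    add_sub_cancel, ← intervalIntegral.integral_Ioi_sub_Ioi' (hf_int θ).integrableOn
      (hf_int θ).integrableOn, sub_sub_cancel]

theorem risk_seeking_policy_gradient_general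
    (α : ℝ)
    (p dp : ℝ → ℝ → ℝ)
    (hp_cont : ∀ θ, Continuous (p θ))
    (hdp : ∀ θ r, HasDerivAt (fun θ' => p θ' r) (dp θ r) θ)
    (hint_p : ∀ θ, Integrable (fun r => (1 + |r|) * p θ r))
    (hdom : ∀ θ₀, ∃ ε > (0 : ℝ), ∃ g : ℝ → ℝ, Integrable g ∧
      ∀ θ, |θ - θ₀| < ε → ∀ r, (1 + |r|) * |dp θ r| ≤ g r)
    (q : ℝ → ℝ)
    (hq : ∀ θ, ∫ r in Set.Ioi (q θ), p θ r = α)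
    (hq_diff : Differentiable ℝ q) :
    ∀ θ, HasDerivAt (fun θ' => (1 / α) * ∫ r in Set.Ioi (q θ'), r * p θ' r)
      ((1 / α) * ∫ r in Set.Ioi (q θ), (r - q θ) * dp θ r) θ := by
  intro θ₀
  set c := q θ₀
  obtain ⟨ε, hε, g, hg, hg_le⟩ := hdom θ₀
  have hint_sub : ∀ θ, Integrable (fun r => (r - c) * p θ r) := fun θ =>
    (hint_p θ).mul_of_abs_le_mul_one_add_abs (by fun_prop)
      fun r => abs_sub_le_one_add_abs_mul_one_add_abs r c
  have hint_const : ∀ θ, Integrable (fun r => c * p θ r) := fun θ =>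
    (hint_p θ).mul_of_abs_le_mul_one_add_abs measurable_const
      fun r => le_mul_of_one_le_right (abs_nonneg c) (le_add_of_nonneg_right (abs_nonneg r))
  have hbaseline :
      ∀ θ, ∫ r in Ioi (q θ), r * p θ r = (∫ r in Ioi (q θ), (r - c) * p θ r) + c * α := by
    intro θ
    rw [← hq θ, ← integral_const_mul, ← integral_add (hint_sub θ).integrableOn
      (hint_const θ).integrableOn]
    exact setIntegral_congr_fun measurableSet_Ioi fun r _ => by ring
  have hdom_sub : ∀ θ ∈ ball θ₀ ε, ∀ r, |(r - c) * dp θ r| ≤ (1 + |c|) * g r :=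
    fun θ hθ r => abs_sub_mul_le_of_one_add_abs_mul_le (hg_le θ (mem_ball_iff_norm.1 hθ) r)
  have hleibniz := hasDerivAt_setIntegral_Ioi_of_dominated (hf_int := hint_sub)
    (fun θ => by fun_prop) (fun θ r => (hdp θ r).const_mul (r - c)) hε (hg.const_mul _)
    hdom_sub (hq_diff θ₀).hasDerivAt
  rw [sub_self, zero_mul, mul_zero, sub_zero] at hleibniz
  simpa only [hbaseline] using (hleibniz.add_const (c * α)).const_mul (1 / α)

/-- **Risk-seeking policy gradient.**
Let `α ∈ (0,1)` and `p θ ·` a continuous strictly positive probability density on `ℝ`,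
continuously differentiable in `θ` with ∂p/∂θ = `dp`, satisfying the stated integrability
and local domination conditions.  Let `q θ` be the unique real with
`∫_{q θ}^∞ p θ r dr = α`, assumed differentiable in `θ`.  Then the risk-seeking
objective `J θ = (1/α) ∫_{q θ}^∞ r · p θ r dr` is differentiable, with derivative
`J' θ = (1/α) ∫_{q θ}^∞ (r - q θ) · dp θ r dr`. -/
theorem risk_seeking_policy_gradient
    (α : ℝ) (hα : α ∈ Set.Ioo (0 : ℝ) 1)
    (p dp : ℝ → ℝ → ℝ)
    (hp_cont : ∀ θ, Continuous (p θ))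
    (hp_pos : ∀ θ r, 0 < p θ r)
    (hp_density : ∀ θ, ∫ r, p θ r = 1)
    (hp_C1 : ∀ r, ContDiff ℝ 1 (fun θ => p θ r))
    (hdp : ∀ θ r, HasDerivAt (fun θ' => p θ' r) (dp θ r) θ)
    (hint_p : ∀ θ, Integrable (fun r => (1 + |r|) * p θ r))
    (hint_dp : ∀ θ, Integrable (fun r => (1 + |r|) * |dp θ r|))
    (hdom : ∀ θ₀, ∃ ε > (0 : ℝ), ∃ g : ℝ → ℝ, Integrable g ∧
      ∀ θ, |θ - θ₀| < ε → ∀ r, (1 + |r|) * |dp θ r| ≤ g r)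
    (q : ℝ → ℝ)
    (hq : ∀ θ, ∫ r in Set.Ioi (q θ), p θ r = α)
    (hq_unique : ∀ θ c, (∫ r in Set.Ioi c, p θ r) = α → c = q θ)
    (hq_diff : Differentiable ℝ q) :
    ∀ θ, HasDerivAt (fun θ' => (1 / α) * ∫ r in Set.Ioi (q θ'), r * p θ' r)
      ((1 / α) * ∫ r in Set.Ioi (q θ), (r - q θ) * dp θ r) θ :=
  risk_seeking_policy_gradient_general α p dp hp_cont hdp hint_p hdom q hq hq_diff
end

section
/- Consider the two-dimensional polynomial system f(x₁, x₂) = (−5x₁³ − 2x₁x₂², −9x₁⁴ + 3x₁³x₂ − 4x₂³) and let V(x₁, x₂) = 9x₁² + x₂². Then for every (x₁, x₂) with |x₁| ≤ 1 and |x₂| ≤ 1 and (x₁, x₂) ≠ (0,0), one has V(x₁, x₂) > 0 and the Lie derivative satisfies L_f V(x₁, x₂) = −90x₁⁴ − 36x₁²x₂² − 18x₁⁴x₂ + 6x₁³x₂² − 8x₂⁴ < 0. -/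
/-- The Lie derivative `L_f V x = ∑ i, (∂V/∂xᵢ)(x) · fᵢ(x)` of `V : ℝⁿ → ℝ`
along the vector field `f : ℝⁿ → ℝⁿ`. -/
noncomputable def lieDeriv {n : ℕ} (V : (Fin n → ℝ) → ℝ)
    (f : (Fin n → ℝ) → (Fin n → ℝ)) (x : Fin n → ℝ) : ℝ :=
  ∑ i, fderiv ℝ V x (Pi.single i 1) * f x i

/-! `V` is the diagonal quadratic form with weights `(9, 1)`, whose Lie derivative along any
field is `∑ i, 2 cᵢ xᵢ fᵢ(x)`. On the box the two indefinite terms of `L_f V` are absorbed by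
the definite ones: `-18 x₁⁴ x₂ ≤ 18 x₁⁴` and `6 x₁³ x₂² ≤ 6 x₁² x₂²`, leaving
`L_f V ≤ -72 x₁⁴ - 30 x₁² x₂² - 8 x₂⁴ < 0`. -/

open Finset

section DiagQuadraticForm

variable {n : ℕ}

def diagQuadraticForm (c x : Fin n → ℝ) : ℝ :=
  ∑ i, c i * x i ^ 2

theorem diagQuadraticForm_pos {c x : Fin n → ℝ} (hc : ∀ i, 0 < c i) (hx : x ≠ 0) :
    0 < diagQuadraticForm c x := by
  obtain ⟨j, hj⟩ := Function.ne_iff.mp hx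
  have hj : x j ≠ 0 := hj
  exact sum_pos' (fun i _ => by have := hc i; positivity)
    ⟨j, mem_univ j, by have := hc j; positivity⟩

theorem hasFDerivAt_diagQuadraticForm (c x : Fin n → ℝ) :
    HasFDerivAt (diagQuadraticForm c)
      (∑ i, (2 * c i * x i) • (ContinuousLinearMap.proj i : (Fin n → ℝ) →L[ℝ] ℝ)) x := by
  have h (i : Fin n) : HasFDerivAt (fun y : Fin n → ℝ => c i * y i ^ 2)
      ((2 * c i * x i) • (ContinuousLinearMap.proj i : (Fin n → ℝ) →L[ℝ] ℝ)) x := by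
    refine (((hasFDerivAt_apply i x).pow 2).const_mul (c i)).congr_fderiv ?_
    ext
    simp only [Nat.add_one_sub_one, pow_one, nsmul_eq_mul, Nat.cast_ofNat,
      smul_apply, ContinuousLinearMap.proj_apply, smul_eq_mul]
    ring
  exact HasFDerivAt.fun_sum fun i _ => h i

theorem lieDeriv_diagQuadraticForm (c : Fin n → ℝ) (f : (Fin n → ℝ) → Fin n → ℝ)
    (x : Fin n → ℝ) :
    lieDeriv (diagQuadraticForm c) f x = ∑ i, 2 * c i * x i * f x i := by
  simp [lieDeriv, (hasFDerivAt_diagQuadraticForm c x).fderiv, Pi.single_apply]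

end DiagQuadraticForm

theorem quartic_neg_of_abs_le_one {a b : ℝ} (ha : |a| ≤ 1) (hb : |b| ≤ 1) (hab : a ≠ 0 ∨ b ≠ 0) :
    -90 * a ^ 4 - 36 * a ^ 2 * b ^ 2 - 18 * a ^ 4 * b + 6 * a ^ 3 * b ^ 2 - 8 * b ^ 4 < 0 := by
  have h₁ : -18 * a ^ 4 * b ≤ 18 * a ^ 4 := by
    nlinarith [(abs_le.mp hb).1, pow_nonneg (sq_nonneg a) 2]
  have h₂ : 6 * a ^ 3 * b ^ 2 ≤ 6 * a ^ 2 * b ^ 2 := by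
    nlinarith [(abs_le.mp ha).2, mul_nonneg (sq_nonneg a) (sq_nonneg b)]
  have h₃ : 0 < 72 * a ^ 4 + 30 * a ^ 2 * b ^ 2 + 8 * b ^ 4 := by
    rcases hab with h | h <;> positivity
  linarith

/-- For the 2-D polynomial system `f(x₁,x₂) = (−5x₁³ − 2x₁x₂², −9x₁⁴ + 3x₁³x₂ − 4x₂³)`
and `V = 9x₁² + x₂²`: on the box `|x₁| ≤ 1`, `|x₂| ≤ 1` minus the origin, `V > 0` and
`L_f V = −90x₁⁴ − 36x₁²x₂² − 18x₁⁴x₂ + 6x₁³x₂² − 8x₂⁴ < 0`. -/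
theorem twoDim_poly_lyapunov :
    ∀ x : Fin 2 → ℝ, |x 0| ≤ 1 → |x 1| ≤ 1 → x ≠ 0 →
      0 < 9 * (x 0) ^ 2 + (x 1) ^ 2 ∧
      lieDeriv (fun y => 9 * (y 0) ^ 2 + (y 1) ^ 2)
        (fun y => ![-5 * (y 0) ^ 3 - 2 * y 0 * (y 1) ^ 2,
                    -9 * (y 0) ^ 4 + 3 * (y 0) ^ 3 * y 1 - 4 * (y 1) ^ 3]) x
        = -90 * (x 0) ^ 4 - 36 * (x 0) ^ 2 * (x 1) ^ 2 - 18 * (x 0) ^ 4 * x 1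
          + 6 * (x 0) ^ 3 * (x 1) ^ 2 - 8 * (x 1) ^ 4 ∧
      -90 * (x 0) ^ 4 - 36 * (x 0) ^ 2 * (x 1) ^ 2 - 18 * (x 0) ^ 4 * x 1
          + 6 * (x 0) ^ 3 * (x 1) ^ 2 - 8 * (x 1) ^ 4 < 0 := by
  intro x h0 h1 hx
  have hV : (fun y : Fin 2 → ℝ => 9 * (y 0) ^ 2 + (y 1) ^ 2) = diagQuadraticForm ![9, 1] := by
    funext y
    simp [diagQuadraticForm, Fin.sum_univ_two]
  have hcoord : x 0 ≠ 0 ∨ x 1 ≠ 0 := by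
    by_contra! h
    exact hx (funext fun i => by fin_cases i <;> simp [h.1, h.2])
  refine ⟨?_, ?_, quartic_neg_of_abs_le_one h0 h1 hcoord⟩
  · rw [show 9 * x 0 ^ 2 + x 1 ^ 2 = diagQuadraticForm ![9, 1] x from congrFun hV x]
    exact diagQuadraticForm_pos (fun i => by fin_cases i <;> norm_num) hx
  · rw [hV, lieDeriv_diagQuadraticForm, Fin.sum_univ_two]
    simp only [Fin.isValue, Matrix.cons_val_zero, Matrix.cons_val_one, Matrix.cons_val_fin_one]
    ring
end

section
/- Consider the three-dimensional polynomial system f(x₁, x₂, x₃) = (−3x₁³ + 3x₁x₃ − 9x₁, −x₁³ − 5x₂ + 5x₃², −9x₃³) and let V(x₁, x₂, x₃) = 9x₁² + x₂² + x₃². Then for every (x₁, x₂, x₃) with |xᵢ| ≤ 1 for i = 1,2,3 and (x₁, x₂, x₃) ≠ (0,0,0), one has V(x₁, x₂, x₃) > 0 and the Lie derivative satisfies L_f V(x₁, x₂, x₃) = −54x₁⁴ + 54x₁²x₃ − 162x₁² − 2x₁³x₂ − 10x₂² + 10x₂x₃² − 18x₃⁴ < 0. -/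
section LieDerivative

variable {n : ℕ}

theorem lieDeriv_eq_fderiv_apply (V : (Fin n → ℝ) → ℝ) (f : (Fin n → ℝ) → (Fin n → ℝ))
    (x : Fin n → ℝ) : lieDeriv V f x = fderiv ℝ V x (f x) := by
  conv_rhs => rw [← Finset.univ_sum_single (f x)]
  simp only [lieDeriv, map_sum]
  refine Finset.sum_congr rfl fun i _ => ?_
  rw [mul_comm, ← smul_eq_mul, ← map_smul, ← Pi.single_smul', smul_eq_mul, mul_one]

theorem hasFDerivAt_sum_mul_sq (c x : Fin n → ℝ) :
    HasFDerivAt (fun y : Fin n → ℝ => ∑ i, c i * y i ^ 2)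
      (∑ i, (2 * c i * x i) • ContinuousLinearMap.proj (R := ℝ) (φ := fun _ => ℝ) i) x := by
  have h (i : Fin n) : HasFDerivAt (fun y : Fin n → ℝ => c i * y i ^ 2)
      ((2 * c i * x i) • ContinuousLinearMap.proj (R := ℝ) (φ := fun _ => ℝ) i) x := by
    refine (((hasFDerivAt_apply (𝕜 := ℝ) i x).pow 2).const_mul (c i)).congr_fderiv ?_
    ext v
    simp only [Nat.add_one_sub_one, pow_one, nsmul_eq_mul, Nat.cast_ofNat, smul_apply,
      ContinuousLinearMap.proj_apply, smul_eq_mul]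
    ring
  simpa only [Finset.sum_fn] using HasFDerivAt.sum fun i (_ : i ∈ Finset.univ) => h i

theorem lieDeriv_sum_mul_sq (c : Fin n → ℝ) (f : (Fin n → ℝ) → (Fin n → ℝ))
    (x : Fin n → ℝ) :
    lieDeriv (fun y => ∑ i, c i * y i ^ 2) f x = ∑ i, 2 * c i * x i * f x i := by
  simp [lieDeriv_eq_fderiv_apply, (hasFDerivAt_sum_mul_sq c x).fderiv]

end LieDerivative

theorem lieDeriv_poly_le {a b c : ℝ} (ha : |a| ≤ 1) (hb : |b| ≤ 1) (hc : c ≤ 1) :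
    -54 * a ^ 4 + 54 * a ^ 2 * c - 162 * a ^ 2 - 2 * a ^ 3 * b - 10 * b ^ 2 + 10 * b * c ^ 2
      - 18 * c ^ 4 ≤ -(106 * a ^ 2 + 5 * b ^ 2 + 13 * c ^ 4) := by
  have hac : a ^ 2 * c ≤ a ^ 2 := mul_le_of_le_one_right (sq_nonneg a) hc
  have hab : -(a ^ 3 * b) ≤ a ^ 2 :=
    calc -(a ^ 3 * b) ≤ |a ^ 3 * b| := neg_le_abs _
      _ = a ^ 2 * (|a| * |b|) := by rw [abs_mul, abs_pow, pow_succ, ← sq_abs a]; ring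
      _ ≤ a ^ 2 := mul_le_of_le_one_right (sq_nonneg a) (mul_le_one₀ ha (abs_nonneg b) hb)
  linarith [two_mul_le_add_sq b (c ^ 2), sq_nonneg (a ^ 2)]

/-- For the 3-D polynomial system
`f = (−3x₁³ + 3x₁x₃ − 9x₁, −x₁³ − 5x₂ + 5x₃², −9x₃³)` and `V = 9x₁² + x₂² + x₃²`:
on the box `|xᵢ| ≤ 1` minus the origin, `V > 0` and
`L_f V = −54x₁⁴ + 54x₁²x₃ − 162x₁² − 2x₁³x₂ − 10x₂² + 10x₂x₃² − 18x₃⁴ < 0`. -/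
theorem threeDim_poly_lyapunov :
    ∀ x : Fin 3 → ℝ, |x 0| ≤ 1 → |x 1| ≤ 1 → |x 2| ≤ 1 → x ≠ 0 →
      0 < 9 * (x 0) ^ 2 + (x 1) ^ 2 + (x 2) ^ 2 ∧
      lieDeriv (fun y => 9 * (y 0) ^ 2 + (y 1) ^ 2 + (y 2) ^ 2)
        (fun y => ![-3 * (y 0) ^ 3 + 3 * y 0 * y 2 - 9 * y 0,
                    -(y 0) ^ 3 - 5 * y 1 + 5 * (y 2) ^ 2,
                    -9 * (y 2) ^ 3]) x
        = -54 * (x 0) ^ 4 + 54 * (x 0) ^ 2 * x 2 - 162 * (x 0) ^ 2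
          - 2 * (x 0) ^ 3 * x 1 - 10 * (x 1) ^ 2 + 10 * x 1 * (x 2) ^ 2
          - 18 * (x 2) ^ 4 ∧
      -54 * (x 0) ^ 4 + 54 * (x 0) ^ 2 * x 2 - 162 * (x 0) ^ 2
          - 2 * (x 0) ^ 3 * x 1 - 10 * (x 1) ^ 2 + 10 * x 1 * (x 2) ^ 2
          - 18 * (x 2) ^ 4 < 0 := by
  intro x h0 h1 h2 hx
  obtain ⟨i, hi⟩ : ∃ i, x i ≠ 0 := Function.ne_iff.mp hx
  have hV : (fun y : Fin 3 → ℝ => 9 * (y 0) ^ 2 + (y 1) ^ 2 + (y 2) ^ 2)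
      = fun y => ∑ i, ![9, 1, 1] i * y i ^ 2 := by
    funext y
    simp [Fin.sum_univ_three]
  refine ⟨?_, ?_, ?_⟩
  · fin_cases i <;> positivity
  · rw [hV, lieDeriv_sum_mul_sq, Fin.sum_univ_three]
    simp only [Fin.isValue, Matrix.cons_val_zero, Matrix.cons_val_one, Matrix.cons_val]
    ring
  · refine (lieDeriv_poly_le h0 h1 (abs_le.mp h2).2).trans_lt (neg_neg_of_pos ?_)
    fin_cases i <;> positivity
end

section
/- The origin is an asymptotically stable equilibrium of the damped pendulum system ẋ₁ = x₂, ẋ₂ = −sin x₁ − (1/10)·x₂: for every ε > 0 there exists δ > 0 such that every solution with ‖x(0)‖ < δ satisfies ‖x(t)‖ < ε for all t ≥ 0, and δ can be chosen so that ‖x(0)‖ < δ implies x(t) → 0 as t → ∞. -/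
/-! The energy `1 - cos x₁ + x₂² / 2` only decreases like `-x₂² / 10`; adding the cross term
`x₁ x₂ / 20` gives a strict Lyapunov function `V`. On the strip `|x₁| ≤ 1` it satisfies
`2/5 ‖x‖² ≤ V x ≤ 3/5 ‖x‖²` and `V̇ ≤ -V / 20`, so by Grönwall `V` decays like `e^{-t/20}` as long
as the solution stays in the strip. It cannot leave the strip when `V (x 0) < 2/5`: at the first
time with `|x₁| = 1` we would have `V ≥ 2/5`. Hence `‖x t‖ ≤ 2 ‖x 0‖ e^{-t/40}` once `‖x 0‖ < 1/2`.
-/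

/-- The damped pendulum vector field `ẋ₁ = x₂`, `ẋ₂ = −sin x₁ − (1/10)x₂` on `ℝ²`. -/
noncomputable def pendulumField (x : EuclideanSpace ℝ (Fin 2)) :
    EuclideanSpace ℝ (Fin 2) :=
  WithLp.toLp 2 ![x 1, -Real.sin (x 0) - (1 / 10) * x 1]

open Real Set Filter Topology

lemma mul_sq_le_one_sub_cos {a : ℝ} (ha : |a| ≤ 1) : 43 / 96 * a ^ 2 ≤ 1 - cos a := by
  have hcos := (abs_le.mp (cos_bound ha)).2
  have ha2 : a ^ 2 ≤ 1 := by nlinarith [sq_abs a, abs_nonneg a]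
  have h4 : |a| ^ 4 = a ^ 2 * a ^ 2 := by rw [← sq_abs a]; ring
  nlinarith

lemma mul_sq_le_mul_sin {a : ℝ} (ha : |a| ≤ 1) : 5 / 6 * a ^ 2 ≤ a * sin a := by
  have ha2 : a ^ 2 ≤ 1 := by nlinarith [sq_abs a, abs_nonneg a]
  have h : |a * (a - sin a)| ≤ a ^ 2 * a ^ 2 / 6 := by
    rw [abs_mul, ← sq_abs a]
    calc |a| * |a - sin a| ≤ |a| * (|a| ^ 3 / 6) := by gcongr; exact abs_sub_sin_le a
      _ = _ := by ring
  nlinarith [(abs_le.mp h).2]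

lemma EuclideanSpace.norm_sq_fin_two (y : EuclideanSpace ℝ (Fin 2)) :
    ‖y‖ ^ 2 = y 0 ^ 2 + y 1 ^ 2 := by
  rw [EuclideanSpace.real_norm_sq_eq, Fin.sum_univ_two]

lemma ContinuousOn.exists_first_eq {g : ℝ → ℝ} {a b c : ℝ} (hab : a ≤ b)
    (hg : ContinuousOn g (Icc a b)) (ha : g a < c) (hb : c ≤ g b) :
    ∃ t ∈ Ioc a b, g t = c ∧ ∀ s ∈ Ico a t, g s < c := by
  set S := Icc a b ∩ g ⁻¹' Ici c
  have hS : IsClosed S := hg.preimage_isClosed_of_isClosed isClosed_Icc isClosed_Ici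
  have hSbdd : BddBelow S := ⟨a, fun s hs => hs.1.1⟩
  have htS : sInf S ∈ S := hS.csInf_mem ⟨b, right_mem_Icc.2 hab, hb⟩ hSbdd
  set t := sInf S
  have hbefore : ∀ s ∈ Ico a t, g s < c := fun s hs =>
    not_le.1 fun hcs => hs.2.not_ge (csInf_le hSbdd ⟨⟨hs.1, hs.2.le.trans htS.1.2⟩, hcs⟩)
  have hat : a < t := htS.1.1.lt_of_ne fun hat => ha.not_ge (hat ▸ htS.2)
  obtain ⟨s, hs, hgs⟩ :=
    intermediate_value_Icc hat.le (hg.mono (Icc_subset_Icc_right htS.1.2)) ⟨ha.le, htS.2⟩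
  have hst : s = t := hs.2.antisymm (not_lt.1 fun hst => (hbefore s ⟨hs.1, hst⟩).ne hgs)
  exact ⟨t, ⟨hat, htS.1.2⟩, hst ▸ hgs, hbefore⟩

noncomputable def pendulumLyapunov (y : EuclideanSpace ℝ (Fin 2)) : ℝ :=
  1 - cos (y 0) + y 1 ^ 2 / 2 + y 0 * y 1 / 20

noncomputable def pendulumLyapunovDeriv (y : EuclideanSpace ℝ (Fin 2)) : ℝ :=
  -(y 1 ^ 2 / 20) - y 0 * sin (y 0) / 20 - y 0 * y 1 / 200

lemma pendulumLyapunov_le (y : EuclideanSpace ℝ (Fin 2)) :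
    pendulumLyapunov y ≤ 3 / 5 * ‖y‖ ^ 2 := by
  rw [EuclideanSpace.norm_sq_fin_two, pendulumLyapunov]
  nlinarith [one_sub_sq_div_two_le_cos (x := y 0), sq_nonneg (y 0 + y 1), sq_nonneg (y 0 - y 1)]

lemma mul_norm_sq_le_pendulumLyapunov {y : EuclideanSpace ℝ (Fin 2)} (hy : |y 0| ≤ 1) :
    2 / 5 * ‖y‖ ^ 2 ≤ pendulumLyapunov y := by
  rw [EuclideanSpace.norm_sq_fin_two, pendulumLyapunov]
  nlinarith [mul_sq_le_one_sub_cos hy, sq_nonneg (y 0 + y 1), sq_nonneg (y 0 - y 1)]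

lemma pendulumLyapunovDeriv_le {y : EuclideanSpace ℝ (Fin 2)} (hy : |y 0| ≤ 1) :
    pendulumLyapunovDeriv y ≤ -(1 / 20) * pendulumLyapunov y := by
  rw [pendulumLyapunovDeriv, pendulumLyapunov]
  nlinarith [one_sub_sq_div_two_le_cos (x := y 0), mul_sq_le_mul_sin hy,
    sq_nonneg (y 0 + y 1), sq_nonneg (y 0 - y 1)]

lemma HasDerivAt.euclideanSpace_apply {ι : Type*} [Fintype ι] {x : ℝ → EuclideanSpace ℝ ι}
    {x' : EuclideanSpace ℝ ι} {t : ℝ} (hx : HasDerivAt x x' t) (i : ι) :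
    HasDerivAt (fun s => x s i) (x' i) t :=
  (EuclideanSpace.proj (𝕜 := ℝ) i).hasFDerivAt.comp_hasDerivAt t hx

lemma hasDerivAt_pendulumLyapunov_comp {x : ℝ → EuclideanSpace ℝ (Fin 2)} {t : ℝ}
    (hx : HasDerivAt x (pendulumField (x t)) t) :
    HasDerivAt (fun s => pendulumLyapunov (x s)) (pendulumLyapunovDeriv (x t)) t := by
  have h0 : HasDerivAt (fun s => x s 0) (x t 1) t := by
    simpa [pendulumField] using hx.euclideanSpace_apply 0
  have h1 : HasDerivAt (fun s => x s 1) (-sin (x t 0) - 1 / 10 * x t 1) t := by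
    simpa [pendulumField] using hx.euclideanSpace_apply 1
  have := (((hasDerivAt_const t 1).sub h0.cos).add ((h1.pow 2).div_const 2)).add
    ((h0.mul h1).div_const 20)
  exact this.congr_deriv (by simp only [pendulumLyapunovDeriv]; ring)

section Trajectory

variable {x : ℝ → EuclideanSpace ℝ (Fin 2)}

lemma pendulumLyapunov_le_mul_exp (hx : ∀ t ≥ 0, HasDerivAt x (pendulumField (x t)) t)
    {T : ℝ} (hT : 0 ≤ T) (hstrip : ∀ s ∈ Ico 0 T, |x s 0| ≤ 1) :
    pendulumLyapunov (x T) ≤ pendulumLyapunov (x 0) * exp (-(T / 20)) := by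
  have hV (s : ℝ) (hs : 0 ≤ s) := hasDerivAt_pendulumLyapunov_comp (hx s hs)
  have := le_gronwallBound_of_liminf_deriv_right_le (K := -(1 / 20)) (ε := 0)
    (fun s hs => (hV s hs.1).continuousAt.continuousWithinAt)
    (fun s hs r hr => (hV s hs.1).hasDerivWithinAt.liminf_right_slope_le hr) le_rfl
    (fun s hs => by simpa using pendulumLyapunovDeriv_le (hstrip s hs)) T ⟨hT, le_rfl⟩
  rw [gronwallBound_ε0] at this
  convert this using 3
  ring

lemma pendulum_abs_apply_zero_lt_one (hx : ∀ t ≥ 0, HasDerivAt x (pendulumField (x t)) t)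
    (h0 : |x 0 0| < 1) (hV : pendulumLyapunov (x 0) < 2 / 5) : ∀ t ≥ 0, |x t 0| < 1 := by
  intro t ht
  by_contra! hge
  have hcont : ContinuousOn (fun s => |x s 0|) (Icc 0 t) := fun s hs =>
    ((hx s hs.1).euclideanSpace_apply 0).continuousAt.abs.continuousWithinAt
  obtain ⟨t₀, ht₀, hhit, hbefore⟩ := hcont.exists_first_eq ht h0 hge
  have hdecay := pendulumLyapunov_le_mul_exp hx ht₀.1.le fun s hs => (hbefore s hs).le
  have hlow := mul_norm_sq_le_pendulumLyapunov hhit.le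
  have hnorm : 1 ≤ ‖x t₀‖ := hhit ▸ PiLp.norm_apply_le (x t₀) 0
  have hexp : exp (-(t₀ / 20)) ≤ 1 := exp_le_one_iff.2 (by linarith [ht₀.1])
  nlinarith [mul_norm_sq_le_pendulumLyapunov h0.le, sq_nonneg ‖x 0‖]

lemma pendulum_norm_le_mul_exp (hx : ∀ t ≥ 0, HasDerivAt x (pendulumField (x t)) t)
    (h0 : ‖x 0‖ < 1 / 2) : ∀ t ≥ 0, ‖x t‖ ≤ 2 * ‖x 0‖ * exp (-(t / 40)) := by
  have hV0 := pendulumLyapunov_le (x 0)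
  have hstrip := pendulum_abs_apply_zero_lt_one hx
    ((PiLp.norm_apply_le (x 0) 0).trans_lt (by linarith)) (by nlinarith [norm_nonneg (x 0)])
  intro t ht
  have hlow := mul_norm_sq_le_pendulumLyapunov (hstrip t ht).le
  have hdecay := pendulumLyapunov_le_mul_exp hx ht fun s hs => (hstrip s hs.1).le
  have hexp : exp (-(t / 20)) = exp (-(t / 40)) ^ 2 := by rw [← exp_nat_mul]; ring_nf
  refine (pow_le_pow_iff_left₀ (norm_nonneg _) (by positivity) two_ne_zero).1 ?_
  nlinarith [exp_pos (-(t / 20))]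

end Trajectory

/-- The origin is an asymptotically stable equilibrium of the damped pendulum:
for every `ε > 0` there is `δ > 0` such that every solution with `‖x 0‖ < δ` stays in
the `ε`-ball for all `t ≥ 0` and converges to the origin as `t → ∞`. -/
theorem pendulum_asymptotically_stable :
    ∀ ε > (0 : ℝ), ∃ δ > (0 : ℝ), ∀ x : ℝ → EuclideanSpace ℝ (Fin 2),
      (∀ t ≥ (0:ℝ), HasDerivAt x (pendulumField (x t)) t) → ‖x 0‖ < δ →
        (∀ t ≥ (0:ℝ), ‖x t‖ < ε) ∧ Filter.Tendsto x Filter.atTop (nhds 0) := by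
  intro ε hε
  refine ⟨min (1 / 2) (ε / 2), by positivity, fun x hx hx0 => ?_⟩
  have hbound := pendulum_norm_le_mul_exp hx (hx0.trans_le (min_le_left _ _))
  have hε' : 2 * ‖x 0‖ < ε := by linarith [hx0.trans_le (min_le_right _ _)]
  refine ⟨fun t ht => ?_, ?_⟩
  · calc ‖x t‖ ≤ 2 * ‖x 0‖ * exp (-(t / 40)) := hbound t ht
      _ ≤ 2 * ‖x 0‖ := mul_le_of_le_one_right (by positivity) (exp_le_one_iff.2 (by linarith))
      _ < ε := hε'
  · rw [tendsto_zero_iff_norm_tendsto_zero]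
    refine squeeze_zero' (.of_forall fun t => norm_nonneg _)
      ((eventually_ge_atTop 0).mono hbound) ?_
    simpa using (tendsto_exp_neg_atTop_nhds_zero.comp
      (tendsto_id.atTop_div_const (by norm_num : (0 : ℝ) < 40))).const_mul (2 * ‖x 0‖)
end
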